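/- Let ν, α ∈ ℝ with α > 0 and α > max{-ν, 0}. Then as |t| → ∞, W_ν(α + it) = O(|t|^{α + ν − 1/2} e^{−π|t|/2}), with implied constant depending on α and ν. -/

import Mathlib

/-!
The factor `Γ(s + ν)` carries all the decay: the integral over `[0, 1/2]` is bounded uniformly
in `t = Im s`, since its integrand has modulus `u^(α-1) (1-u)^(-α-ν)`.

For `Γ` itself, `φ(z) = Γ(z) z^(1/2-z)` is bounded by `√(2π)` on `Re z ≥ 1/2`. On `Re z = 1/2`
this is the reflection formula `|Γ(1/2 + it)|² = π / cosh(πt)`; on `Re z = 1/2 + n` it follows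
from `Γ(z + 1) = z Γ(z)`; in between it follows by Phragmén–Lindelöf, since on each strip `φ`
grows at most like `exp(π |Im z| / 2)`. As `|z^(1/2-z)| = |z|^(1/2-σ) e^(t arg z)` and
`t arg z ≥ π|t|/2 - σ` for `z = σ + it`, this gives `|Γ(σ + it)| ≪ |t|^(σ-1/2) e^(-π|t|/2)` for
`σ ≥ 1/2`, and one more use of `Γ(z + 1) = z Γ(z)` extends it to `σ > 0`.
-/

open MeasureTheory Real Set Filter Asymptotics

/-- `W_ν(s) = Γ(s+ν) · ∫₀^(1/2) u^(s-1) (1-u)^(-s-ν) du`, which agrees with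
`∫₀^∞ Γ(ν, 2x) e^x x^(s-1) dx` for `Re s > max (-ν) 0`. -/
noncomputable def W (ν : ℝ) (s : ℂ) : ℂ :=
  Complex.Gamma (s + (ν:ℂ)) *
    ∫ u in (0:ℝ)..(1/2 : ℝ), (u:ℂ) ^ (s - 1) * ((1:ℂ) - (u:ℂ)) ^ (-s - (ν:ℂ))

theorem Real.mul_cos_le_sin {x : ℝ} (h0 : 0 ≤ x) (h1 : x ≤ π / 2) : x * cos x ≤ sin x := by
  rcases h1.lt_or_eq with h1 | rfl
  · have hcos : 0 < cos x := cos_pos_of_mem_Ioo ⟨by linarith [pi_pos], h1⟩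
    have := le_tan h0 h1
    rwa [tan_eq_sin_div_cos, le_div_iff₀ hcos] at this
  · simp

namespace Complex

theorem im_mul_arg_eq_abs_mul_abs (z : ℂ) : z.im * arg z = |z.im| * |arg z| := by
  rw [← abs_mul, abs_of_nonneg]
  rcases le_total 0 z.im with h | h
  · exact mul_nonneg h (arg_nonneg_iff.mpr h)
  · rcases h.lt_or_eq with h | h
    · exact mul_nonneg_of_nonpos_of_nonpos h.le (arg_neg_iff.mpr h).le
    · simp [h]

theorem im_mul_arg_le {z : ℂ} (hz : 0 ≤ z.re) : z.im * arg z ≤ π * |z.im| / 2 :=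
  calc z.im * arg z = |z.im| * |arg z| := im_mul_arg_eq_abs_mul_abs z
    _ ≤ |z.im| * (π / 2) := by gcongr; exact abs_arg_le_pi_div_two_iff.mpr hz
    _ = π * |z.im| / 2 := by ring

theorem pi_mul_abs_im_div_two_le {z : ℂ} (hz : 0 < z.re) :
    π * |z.im| / 2 ≤ z.im * arg z + z.re := by
  have hz0 : z ≠ 0 := by rintro rfl; simp at hz
  have hθ : |arg z| ≤ π / 2 := abs_arg_le_pi_div_two_iff.mpr hz.le
  have key := Real.mul_cos_le_sin (x := π / 2 - |arg z|) (by linarith)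
    (by linarith [abs_nonneg (arg z)])
  rw [Real.cos_pi_div_two_sub, Real.sin_pi_div_two_sub,
    ← Real.abs_sin_eq_sin_abs_of_abs_le_pi (by linarith [pi_pos]), Real.cos_abs] at key
  have him : |z.im| = ‖z‖ * |Real.sin (arg z)| := by
    rw [sin_arg, abs_div, abs_norm, mul_div_cancel₀ _ (norm_ne_zero_iff.mpr hz0)]
  have hre : z.re = ‖z‖ * Real.cos (arg z) := by
    rw [cos_arg hz0, mul_div_cancel₀ _ (norm_ne_zero_iff.mpr hz0)]
  calc π * |z.im| / 2 = ‖z‖ * ((π / 2 - |arg z|) * |Real.sin (arg z)|) + |z.im| * |arg z| := by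
        rw [him]; ring
    _ ≤ ‖z‖ * Real.cos (arg z) + |z.im| * |arg z| := by gcongr
    _ = z.im * arg z + z.re := by rw [← hre, im_mul_arg_eq_abs_mul_abs]; ring

theorem norm_cpow_half_sub_self {z : ℂ} (hz : z ≠ 0) :
    ‖z ^ ((1/2 : ℂ) - z)‖ = ‖z‖ ^ (1/2 - z.re) * Real.exp (z.im * arg z) := by
  rw [norm_cpow_of_ne_zero hz, div_eq_mul_inv, ← Real.exp_neg]
  simp [mul_comm]

theorem norm_Gamma_le_Gamma_re {z : ℂ} (hz : 0 < z.re) : ‖Gamma z‖ ≤ Real.Gamma z.re := by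
  rw [Gamma_eq_integral hz, Real.Gamma_eq_integral hz, GammaIntegral]
  refine norm_integral_le_of_norm_le (Real.GammaIntegral_convergent hz) ?_
  filter_upwards [ae_restrict_mem measurableSet_Ioi] with x (hx : (0:ℝ) < x)
  rw [norm_mul, norm_real, Real.norm_eq_abs, norm_cpow_eq_rpow_re_of_pos hx,
    abs_of_pos (Real.exp_pos _)]
  simp

theorem norm_Gamma_sq_of_re_eq_half {z : ℂ} (hz : z.re = 1/2) :
    ‖Gamma z‖ ^ 2 = π / Real.cosh (π * z.im) := by
  have hconj : 1 - z = starRingEnd ℂ z := ext (by simp [hz]; norm_num) (by simp)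
  have hsin : sin (π * z) = Real.cosh (π * z.im) := by
    have : (π : ℂ) * z = (π / 2 : ℝ) + (π * z.im : ℝ) * I := ext (by simp [hz]; ring) (by simp)
    rw [this, sin_add_mul_I, ← ofReal_sin, ← ofReal_cos, Real.sin_pi_div_two, Real.cos_pi_div_two]
    simp
  apply ofReal_injective
  rw [ofReal_div, ofReal_pow, ← mul_conj', ← Gamma_conj, ← hconj, Gamma_mul_Gamma_one_sub, hsin]

theorem norm_Gamma_le_of_re_eq_half {z : ℂ} (hz : z.re = 1/2) :
    ‖Gamma z‖ ≤ √(2 * π) * Real.exp (-π * |z.im| / 2) := by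
  have hcosh : Real.exp (π * |z.im|) ≤ 2 * Real.cosh (π * z.im) := by
    have := Real.exp_abs_le (π * z.im)
    rw [abs_mul, abs_of_pos pi_pos] at this
    rw [Real.cosh_eq]; linarith
  refine (pow_le_pow_iff_left₀ (norm_nonneg _) (by positivity) two_ne_zero).mp ?_
  rw [norm_Gamma_sq_of_re_eq_half hz, mul_pow, Real.sq_sqrt (by positivity), ← Real.exp_nat_mul,
    div_le_iff₀ (Real.cosh_pos _)]
  calc π = 2 * π * Real.exp (-(π * |z.im|)) * (Real.exp (π * |z.im|) / 2) := by
        rw [Real.exp_neg]; field_simp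
    _ ≤ 2 * π * Real.exp ((2 : ℕ) * (-π * |z.im| / 2)) * Real.cosh (π * z.im) := by
        rw [show ((2 : ℕ) : ℝ) * (-π * |z.im| / 2) = -(π * |z.im|) by push_cast; ring]
        gcongr; linarith

theorem norm_le_norm_add_ofReal {z : ℂ} {a : ℝ} (hz : 0 ≤ z.re) (ha : 0 ≤ a) :
    ‖z‖ ≤ ‖z + a‖ := by
  rw [← sq_le_sq₀ (norm_nonneg _) (norm_nonneg _), Complex.sq_norm, Complex.sq_norm,
    normSq_apply, normSq_apply]
  simp only [add_re, ofReal_re, add_im, ofReal_im, add_zero]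
  nlinarith

theorem norm_Gamma_add_nat_le {z : ℂ} (hz : 0 < z.re) (n : ℕ) :
    ‖Gamma (z + n)‖ ≤ ‖Gamma z‖ * ‖z + n‖ ^ n := by
  induction n with
  | zero => simp
  | succ n ih =>
    have hre : 0 < (z + n).re := by simp; positivity
    have hne : z + n ≠ 0 := by rintro h; simp [h] at hre
    have hmono : ‖z + n‖ ≤ ‖z + (n + 1 : ℕ)‖ := by
      simpa [add_assoc] using norm_le_norm_add_ofReal hre.le zero_le_one
    calc ‖Gamma (z + (n + 1 : ℕ))‖ = ‖z + n‖ * ‖Gamma (z + n)‖ := by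
          rw [Nat.cast_succ, ← add_assoc, Gamma_add_one _ hne, norm_mul]
      _ ≤ ‖z + (n + 1 : ℕ)‖ * (‖Gamma z‖ * ‖z + (n + 1 : ℕ)‖ ^ n) := by
          gcongr
          exact ih.trans (by gcongr)
      _ = ‖Gamma z‖ * ‖z + (n + 1 : ℕ)‖ ^ (n + 1) := by ring

theorem norm_Gamma_mul_cpow_le_of_re_eq_half_add_nat (n : ℕ) {w : ℂ} (hw : w.re = 1/2 + n) :
    ‖Gamma w * w ^ ((1/2 : ℂ) - w)‖ ≤ √(2 * π) := by
  have hre : 0 < w.re := by rw [hw]; positivity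
  have hw0 : w ≠ 0 := by rintro rfl; simp at hre
  have hnorm : 0 < ‖w‖ := norm_pos_iff.mpr hw0
  have hΓ : ‖Gamma w‖ ≤ √(2 * π) * Real.exp (-π * |w.im| / 2) * ‖w‖ ^ n := by
    have hhalf : (w - n).re = 1/2 := by simp [hw]
    have := norm_Gamma_add_nat_le (z := w - n) (by rw [hhalf]; norm_num) n
    rw [sub_add_cancel] at this
    refine this.trans ?_
    gcongr
    simpa using norm_Gamma_le_of_re_eq_half hhalf
  rw [norm_mul, norm_cpow_half_sub_self hw0, hw, show (1/2 - (1/2 + n) : ℝ) = -n by ring,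
    Real.rpow_neg hnorm.le, Real.rpow_natCast]
  calc ‖Gamma w‖ * ((‖w‖ ^ n)⁻¹ * Real.exp (w.im * arg w))
      ≤ (√(2 * π) * Real.exp (-π * |w.im| / 2) * ‖w‖ ^ n) *
          ((‖w‖ ^ n)⁻¹ * Real.exp (π * |w.im| / 2)) := by
        gcongr
        exact im_mul_arg_le hre.le
    _ = √(2 * π) * Real.exp (-π * |w.im| / 2 + π * |w.im| / 2) * (‖w‖ ^ n * (‖w‖ ^ n)⁻¹) := by
        rw [Real.exp_add]; ring
    _ = √(2 * π) := by
        rw [mul_inv_cancel₀ (by positivity), neg_mul, neg_div, neg_add_cancel]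
        simp

theorem exists_norm_Gamma_mul_cpow_le_of_re_mem_Icc (b : ℝ) :
    ∃ M, ∀ w : ℂ, w.re ∈ Icc (1/2) b →
      ‖Gamma w * w ^ ((1/2 : ℂ) - w)‖ ≤ M * Real.exp (π * |w.im| / 2) := by
  have hcont : ContinuousOn Real.Gamma (Icc (1/2) b) := fun x hx =>
    (Real.differentiableAt_Gamma fun m h => by linarith [hx.1, (m.cast_nonneg : (0:ℝ) ≤ m)]
      ).continuousAt.continuousWithinAt
  obtain ⟨C, hC⟩ := isCompact_Icc.exists_bound_of_continuousOn hcont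
  refine ⟨C * 2 ^ (b - 1/2), fun w hw => ?_⟩
  have hre : 0 < w.re := by linarith [hw.1]
  have hw0 : w ≠ 0 := by rintro rfl; simp at hre
  have hΓ : ‖Gamma w‖ ≤ C :=
    (norm_Gamma_le_Gamma_re hre).trans ((le_abs_self _).trans (hC _ hw))
  have hpow : ‖w‖ ^ (1/2 - w.re) ≤ 2 ^ (b - 1/2) :=
    calc ‖w‖ ^ (1/2 - w.re) ≤ (1/2 : ℝ) ^ (1/2 - w.re) :=
          Real.rpow_le_rpow_of_nonpos (by norm_num) (hw.1.trans (re_le_norm w))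
            (by linarith [hw.1])
      _ = 2 ^ (w.re - 1/2) := by
          rw [one_div, Real.inv_rpow zero_le_two, ← Real.rpow_neg zero_le_two, neg_sub]
      _ ≤ 2 ^ (b - 1/2) := Real.rpow_le_rpow_of_exponent_le one_le_two (by linarith [hw.2])
  rw [norm_mul, norm_cpow_half_sub_self hw0, mul_assoc]
  gcongr
  · exact (norm_nonneg _).trans hΓ
  · exact im_mul_arg_le hre.le

theorem norm_Gamma_mul_cpow_le_of_re_mem_Icc {n : ℕ} (hn : 1 ≤ n) {z : ℂ}
    (hz : z.re ∈ Icc (1/2 : ℝ) (1/2 + n)) :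
    ‖Gamma z * z ^ ((1/2 : ℂ) - z)‖ ≤ √(2 * π) := by
  have hn0 : (0 : ℝ) < n := by exact_mod_cast hn
  obtain ⟨M, hM⟩ := exists_norm_Gamma_mul_cpow_le_of_re_mem_Icc (1/2 + n)
  have hdiff : DifferentiableOn ℂ (fun w => Gamma w * w ^ ((1/2 : ℂ) - w))
      (closure (re ⁻¹' Ioo (1/2) (1/2 + n))) := by
    rw [closure_preimage_re, closure_Ioo (by linarith)]
    intro w (hw : w.re ∈ Icc _ _)
    have hre : 0 < w.re := by linarith [hw.1]
    refine ((differentiableAt_Gamma w fun m h => ?_).mul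
      (differentiableAt_id.cpow (by fun_prop) (Or.inl hre))).differentiableWithinAt
    have : w.re = -m := by simp [h]
    linarith [(m.cast_nonneg : (0:ℝ) ≤ m)]
  -- growth of order `exp (π |y| / 2)` is far below the Phragmén–Lindelöf threshold
  have hgrowth : ∀ y : ℝ, π * |y| / 2 ≤ n * Real.exp (π / (2 * n) * |y|) := fun y =>
    calc π * |y| / 2 = n * (π / (2 * n) * |y|) := by field_simp
      _ ≤ n * Real.exp (π / (2 * n) * |y|) := by
          gcongr; linarith [Real.add_one_le_exp (π / (2 * n) * |y|)]
  refine PhragmenLindelof.vertical_strip (f := fun w => Gamma w * w ^ ((1/2 : ℂ) - w))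
    hdiff.diffContOnCl ⟨π / (2 * n), ?_, n, ?_⟩
    (fun w hw => norm_Gamma_mul_cpow_le_of_re_eq_half_add_nat 0 (by simpa using hw))
    (fun w hw => norm_Gamma_mul_cpow_le_of_re_eq_half_add_nat n hw) hz.1 hz.2
  · rw [add_sub_cancel_left]
    gcongr
    linarith
  · refine (IsBigO.of_bound M (g := fun w => Real.exp (π * |w.im| / 2)) ?_).trans
      (isBigO_of_le _ fun w => ?_)
    · refine eventually_inf_principal.mpr (Eventually.of_forall fun w hw => ?_)
      rw [Real.norm_of_nonneg (Real.exp_pos _).le]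
      exact hM w (Ioo_subset_Icc_self hw)
    · simp only [Real.norm_of_nonneg (Real.exp_pos _).le]
      exact Real.exp_le_exp.mpr (hgrowth w.im)

theorem norm_Gamma_le_of_half_le_re {z : ℂ} (hz : 1/2 ≤ z.re) :
    ‖Gamma z‖ ≤ √(2 * π) * ‖z‖ ^ (z.re - 1/2) * Real.exp (-(z.im * arg z)) := by
  have hz0 : z ≠ 0 := by rintro rfl; norm_num at hz
  have hnorm : 0 < ‖z‖ := norm_pos_iff.mpr hz0
  have h := norm_Gamma_mul_cpow_le_of_re_mem_Icc (n := ⌈z.re⌉₊ + 1) (by omega)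
    ⟨hz, by push_cast; linarith [Nat.le_ceil z.re]⟩
  rw [norm_mul, norm_cpow_half_sub_self hz0, ← le_div_iff₀ (by positivity)] at h
  refine h.trans_eq ?_
  rw [div_mul_eq_div_div, div_eq_mul_inv, div_eq_mul_inv, ← Real.rpow_neg hnorm.le, neg_sub,
    ← Real.exp_neg]

theorem isBigO_Gamma_of_half_le {σ : ℝ} (hσ : 1/2 ≤ σ) :
    (fun t : ℝ => Gamma (σ + t * I)) =O[cocompact ℝ]
      fun t => |t| ^ (σ - 1/2) * Real.exp (-π * |t| / 2) := by
  refine IsBigO.of_bound (√(2 * π) * (σ + 1) ^ (σ - 1/2) * Real.exp σ) ?_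
  filter_upwards [tendsto_norm_cocompact_atTop.eventually_ge_atTop 1] with t (ht : 1 ≤ |t|)
  set z : ℂ := σ + t * I
  have hre : z.re = σ := by simp [z]
  have him : z.im = t := by simp [z]
  have hnorm : ‖z‖ ≤ (σ + 1) * |t| :=
    calc ‖z‖ ≤ |z.re| + |z.im| := norm_le_abs_re_add_abs_im z
      _ = σ + |t| := by rw [hre, him, abs_of_nonneg (by linarith)]
      _ ≤ (σ + 1) * |t| := by nlinarith
  have harg : -(z.im * arg z) ≤ σ + -π * |t| / 2 := by
    have := pi_mul_abs_im_div_two_le (z := z) (by linarith)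
    rw [hre, him] at this
    rw [him]
    linarith
  have h := norm_Gamma_le_of_half_le_re (z := z) (by rwa [hre])
  rw [hre] at h
  rw [Real.norm_of_nonneg (by positivity)]
  calc ‖Gamma z‖ ≤ √(2 * π) * ((σ + 1) * |t|) ^ (σ - 1/2) * Real.exp (σ + -π * |t| / 2) := by
        refine h.trans ?_
        gcongr
    _ = √(2 * π) * (σ + 1) ^ (σ - 1/2) * Real.exp σ *
          (|t| ^ (σ - 1/2) * Real.exp (-π * |t| / 2)) := by
        rw [Real.mul_rpow (by linarith) (abs_nonneg t), Real.exp_add]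
        ring

theorem isBigO_Gamma {σ : ℝ} (hσ : 0 < σ) :
    (fun t : ℝ => Gamma (σ + t * I)) =O[cocompact ℝ]
      fun t => |t| ^ (σ - 1/2) * Real.exp (-π * |t| / 2) := by
  rcases le_or_gt (1/2) σ with h | h
  · exact isBigO_Gamma_of_half_le h
  have hlarge : ∀ᶠ t : ℝ in cocompact ℝ, 1 ≤ |t| :=
    tendsto_norm_cocompact_atTop.eventually_ge_atTop 1
  -- `Γ s = Γ (s + 1) / s` with `|s| ≥ |t|` gains the missing power of `|t|`
  have hinv : (fun t : ℝ => ((σ : ℂ) + t * I)⁻¹) =O[cocompact ℝ] fun t => |t|⁻¹ := by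
    refine IsBigO.of_bound' (hlarge.mono fun t ht => ?_)
    simp only [norm_inv, Real.norm_eq_abs, abs_abs]
    exact inv_anti₀ (by linarith) (by simpa using abs_im_le_norm ((σ : ℂ) + t * I))
  refine ((isBigO_Gamma_of_half_le (σ := σ + 1) (by linarith)).mul hinv).congr'
    (Eventually.of_forall fun t => ?_) (hlarge.mono fun t ht => ?_)
  · dsimp only
    have hne : (σ : ℂ) + t * I ≠ 0 := fun h0 => by
      have := congrArg re h0
      simp at this
      linarith
    rw [ofReal_add, ofReal_one, add_right_comm, Gamma_add_one _ hne, mul_comm, ← mul_assoc,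
      inv_mul_cancel₀ hne, one_mul]
  · dsimp only
    rw [show σ + 1 - 1/2 = σ - 1/2 + 1 by ring, Real.rpow_add_one (by positivity)]
    field_simp

end Complex

theorem norm_integral_cpow_mul_one_sub_cpow_le (ν : ℝ) {s : ℂ} (hs : 0 < s.re) :
    ‖∫ u in (0:ℝ)..(1/2), (u : ℂ) ^ (s - 1) * (1 - (u : ℂ)) ^ (-s - ν)‖ ≤
      ∫ u in (0:ℝ)..(1/2), u ^ (s.re - 1) * (1 - u) ^ (-s.re - ν) := by
  refine intervalIntegral.norm_integral_le_of_norm_le (by norm_num)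
    (Eventually.of_forall fun u hu => ?_) ?_
  · have h1u : 0 < 1 - u := by linarith [hu.2]
    rw [norm_mul, ← Complex.ofReal_one, ← Complex.ofReal_sub,
      Complex.norm_cpow_eq_rpow_re_of_pos hu.1, Complex.norm_cpow_eq_rpow_re_of_pos h1u]
    simp
  · refine (intervalIntegral.intervalIntegrable_rpow' (by linarith)).mul_continuousOn
      fun u hu => ContinuousAt.continuousWithinAt ?_
    rw [uIcc_of_le (by norm_num)] at hu
    exact ContinuousAt.rpow_const (by fun_prop) (Or.inl (sub_pos.mpr (by linarith [hu.2])).ne')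

theorem W_isBigO_general (ν α : ℝ) (hα' : α > max (-ν) 0) :
    (fun t : ℝ => W ν ((α:ℂ) + (t:ℂ) * Complex.I))
      =O[Filter.cocompact ℝ]
        fun t : ℝ => |t| ^ (α + ν - 1/2) * Real.exp (-π * |t| / 2) := by
  have hαν : 0 < α + ν := by linarith [le_max_left (-ν) 0]
  have hα : 0 < α := (le_max_right _ _).trans_lt hα'
  have hintegral : (fun t : ℝ => ∫ u in (0:ℝ)..(1/2),
      (u : ℂ) ^ ((α + t * Complex.I) - 1) * (1 - (u : ℂ)) ^ (-(α + t * Complex.I) - ν))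
        =O[cocompact ℝ] fun _ => (1 : ℝ) := by
    refine IsBigO.of_bound (∫ u in (0:ℝ)..(1/2), u ^ (α - 1) * (1 - u) ^ (-α - ν))
      (Eventually.of_forall fun t => ?_)
    simpa using norm_integral_cpow_mul_one_sub_cpow_le ν (s := α + t * Complex.I) (by simpa)
  refine ((Complex.isBigO_Gamma hαν).mul hintegral).congr (fun t => ?_) fun t => mul_one _
  rw [W]
  congr 2
  push_cast
  ring

/-- Stirling-type bound: for `α > 0`, `α > max (-ν) 0`, as `|t| → ∞`,
`W_ν(α + it) = O(|t|^(α+ν-1/2) e^(-π|t|/2))`. -/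
theorem W_isBigO (ν α : ℝ) (hα : 0 < α) (hα' : α > max (-ν) 0) :
    (fun t : ℝ => W ν ((α:ℂ) + (t:ℂ) * Complex.I))
      =O[Filter.cocompact ℝ]
        fun t : ℝ => |t| ^ (α + ν - 1/2) * Real.exp (-π * |t| / 2) :=
  W_isBigO_general ν α hα'
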